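/- The sequence f_k(0) = I_k(−i/h²)/I_0(1/h²) is a nonzero solution datum for the discrete Schrödinger equation whose evolution satisfies f_k(1) = e^{−2i/h²} I_k(i/h²)/I_0(1/h²); consequently |f_k(0)| ≤ I_k(1/h²)/I_0(1/h²) and |f_k(1)| ≤ I_k(1/h²)/I_0(1/h²), showing the condition α + β < 2 in the discrete Hardy theorem is sharp (here α = β = 1). -/

import Mathlib

/-!
Expanding `exp (z cos θ)` gives `I_k(z) = ∑ₙ cₙₖ zⁿ / n!` with
`cₙₖ = (1/π) ∫₀^π cosⁿ θ cos kθ dθ`; the product-to-sum formula gives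
`cₙ₊₁,ₖ = (cₙ,ₖ₋₁ + cₙ,ₖ₊₁) / 2`, so all `cₙₖ ≥ 0`, whence `|I_k(z)| ≤ I_k(|z|)` and `I_0(x) ≥ 1`.

The `I_k(z)` are the Fourier coefficients of `θ ↦ exp (z cos θ)` on the circle, so Parseval's
identity for `exp (z̄ cos θ)` and `exp (w cos θ) e^{ikθ}` is the addition formula
`∑ₘ I_m(z) I_{k-m}(w) = I_k(z + w)`. It sums the series defining `f k t` to
`e^{-2it/h²} I_k(-i/h² + 2it/h²) / I_0(1/h²)`; at `t = 0, 1` the argument has modulus `1/h²`,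
and `f(0) ≠ 0` because `∑ₘ I_m(z) I_{-m}(-z) = I_0(0) = 1`.
-/

open MeasureTheory

/-- Modified Bessel function of integer order `k`, complex argument:
`I_k(z) = (1/π) ∫₀^π e^{z cos θ} cos(kθ) dθ`. -/
noncomputable def besselI (k : ℤ) (z : ℂ) : ℂ :=
  (1 / (Real.pi : ℂ)) * ∫ θ in (0:ℝ)..Real.pi, Complex.exp (z * Real.cos θ) * Real.cos (k * θ)

/-- Modified Bessel function of integer order `k`, real argument. -/
noncomputable def besselIR (k : ℤ) (x : ℝ) : ℝ :=
  (1 / Real.pi) * ∫ θ in (0:ℝ)..Real.pi, Real.exp (x * Real.cos θ) * Real.cos (k * θ)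

open scoped Real ComplexConjugate

theorem integral_cos_intCast_mul {k : ℤ} (hk : k ≠ 0) :
    ∫ θ in (0:ℝ)..π, Real.cos (k * θ) = 0 := by
  have hk' : (k : ℝ) ≠ 0 := Int.cast_ne_zero.mpr hk
  rw [intervalIntegral.integral_comp_mul_left (fun x => Real.cos x) hk', mul_zero, integral_cos,
    Real.sin_int_mul_pi, Real.sin_zero, sub_zero, smul_zero]

theorem integral_neg_interval_eq_add_comp_neg {E : Type*} [NormedAddCommGroup E]
    [NormedSpace ℝ E] {g : ℝ → E} (hg : Continuous g) (a : ℝ) :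
    ∫ x in -a..a, g x = ∫ x in (0:ℝ)..a, (g x + g (-x)) := by
  have hg_neg : Continuous fun x => g (-x) := hg.comp continuous_neg
  rw [intervalIntegral.integral_add (hg.intervalIntegrable _ _) (hg_neg.intervalIntegrable _ _),
    intervalIntegral.integral_comp_neg, neg_zero, add_comm,
    intervalIntegral.integral_add_adjacent_intervals (hg.intervalIntegrable _ _)
      (hg.intervalIntegrable _ _)]

section Fourier

variable {T : ℝ} [Fact (0 < T)]

theorem hasSum_conj_fourierCoeff_mul_fourierCoeff (f g : C(AddCircle T, ℂ)) :
    HasSum (fun n => conj (fourierCoeff f n) * fourierCoeff g n)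
      (∫ t, conj (f t) * g t ∂AddCircle.haarAddCircle) := by
  have h := fourierBasis.hasSum_inner_mul_inner (ContinuousMap.toLp 2 AddCircle.haarAddCircle ℂ f)
    (ContinuousMap.toLp 2 AddCircle.haarAddCircle ℂ g)
  simp only [← inner_conj_symm _ (fourierBasis _), ← HilbertBasis.repr_apply_apply,
    fourierBasis_repr, fourierCoeff_toLp, ContinuousMap.inner_toLp] at h
  simpa only [mul_comm (g _)] using h

theorem fourierCoeff_mul_fourier (f : AddCircle T → ℂ) (k m : ℤ) :
    fourierCoeff (fun t => f t * fourier k t) m = fourierCoeff f (m - k) := by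
  unfold fourierCoeff
  congr 1 with t
  rw [smul_eq_mul, smul_eq_mul, mul_left_comm, ← fourier_add]
  ring_nf

end Fourier

noncomputable def cosMoment (n : ℕ) (k : ℤ) : ℝ :=
  (1 / π) * ∫ θ in (0:ℝ)..π, Real.cos θ ^ n * Real.cos (k * θ)

theorem cosMoment_zero (k : ℤ) : cosMoment 0 k = if k = 0 then 1 else 0 := by
  rcases eq_or_ne k 0 with rfl | hk
  · simp [cosMoment, Real.pi_ne_zero]
  · simp [cosMoment, integral_cos_intCast_mul hk, hk]

theorem cosMoment_succ (n : ℕ) (k : ℤ) :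
    cosMoment (n + 1) k = (cosMoment n (k - 1) + cosMoment n (k + 1)) / 2 := by
  have product_to_sum : ∀ θ : ℝ, Real.cos θ ^ (n + 1) * Real.cos (k * θ) =
      (Real.cos θ ^ n * Real.cos ((k - 1 : ℤ) * θ) +
        Real.cos θ ^ n * Real.cos ((k + 1 : ℤ) * θ)) / 2 := by
    intro θ
    push_cast
    rw [sub_one_mul, add_one_mul, Real.cos_sub, Real.cos_add, pow_succ]
    ring
  have hint : ∀ j : ℤ, IntervalIntegrable (fun θ => Real.cos θ ^ n * Real.cos (j * θ)) volume 0 π :=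
    fun j => by apply Continuous.intervalIntegrable; fun_prop
  simp only [cosMoment, product_to_sum, intervalIntegral.integral_div,
    intervalIntegral.integral_add (hint _) (hint _)]
  ring

theorem cosMoment_nonneg (n : ℕ) (k : ℤ) : 0 ≤ cosMoment n k := by
  induction n generalizing k with
  | zero => rw [cosMoment_zero]; split_ifs <;> norm_num
  | succ n ih => rw [cosMoment_succ]; linarith [ih (k - 1), ih (k + 1)]

theorem hasSum_besselI (k : ℤ) (z : ℂ) :
    HasSum (fun n : ℕ => z ^ n / n.factorial * cosMoment n k) (besselI k z) := by
  have pointwise : ∀ θ : ℝ, HasSum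
      (fun n : ℕ => z ^ n / n.factorial * ((Real.cos θ ^ n * Real.cos (k * θ) : ℝ) : ℂ))
      (Complex.exp (z * Real.cos θ) * Real.cos (k * θ)) := fun θ => by
    have hexp : HasSum (fun n : ℕ => (z * Real.cos θ) ^ n / n.factorial)
        (Complex.exp (z * Real.cos θ)) := by
      rw [Complex.exp_eq_exp_ℂ]; exact NormedSpace.expSeries_div_hasSum_exp _
    convert hexp.mul_right (Real.cos (k * θ) : ℂ) using 2 with n
    · rfl
    · push_cast; ring
  have bound : ∀ (n : ℕ) (θ : ℝ),
      ‖z ^ n / n.factorial * ((Real.cos θ ^ n * Real.cos (k * θ) : ℝ) : ℂ)‖ ≤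
        ‖z‖ ^ n / n.factorial := fun n θ => by
    rw [norm_mul, norm_div, norm_pow, Complex.norm_natCast, Complex.norm_real, Real.norm_eq_abs,
      abs_mul, abs_pow]
    exact mul_le_of_le_one_right (by positivity) <|
      mul_le_one₀ (pow_le_one₀ (abs_nonneg _) (Real.abs_cos_le_one θ)) (abs_nonneg _)
        (Real.abs_cos_le_one _)
  have integrated : HasSum
      (fun n : ℕ => ∫ θ in (0:ℝ)..π,
        z ^ n / n.factorial * ((Real.cos θ ^ n * Real.cos (k * θ) : ℝ) : ℂ))
      (∫ θ in (0:ℝ)..π, Complex.exp (z * Real.cos θ) * Real.cos (k * θ)) :=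
    intervalIntegral.hasSum_integral_of_dominated_convergence (fun n _ => ‖z‖ ^ n / n.factorial)
    (fun n => by apply Continuous.aestronglyMeasurable; fun_prop)
    (fun n => Filter.Eventually.of_forall fun θ _ => bound n θ)
    (Filter.Eventually.of_forall fun _ _ => Real.summable_pow_div_factorial _)
    intervalIntegrable_const (Filter.Eventually.of_forall fun θ _ => pointwise θ)
  have termwise : ∀ n : ℕ, 1 / (π : ℂ) * ∫ θ in (0:ℝ)..π,
      z ^ n / n.factorial * ((Real.cos θ ^ n * Real.cos (k * θ) : ℝ) : ℂ) =
        z ^ n / n.factorial * cosMoment n k := fun n => by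
    rw [intervalIntegral.integral_const_mul, intervalIntegral.integral_ofReal, cosMoment]
    push_cast
    ring
  have := integrated.mul_left (1 / (π : ℂ))
  simp only [termwise] at this
  exact this

theorem besselI_ofReal (k : ℤ) (x : ℝ) : besselI k x = besselIR k x := by
  rw [besselI, besselIR]
  push_cast
  rw [← intervalIntegral.integral_ofReal]
  push_cast
  rfl

theorem hasSum_besselIR (k : ℤ) (x : ℝ) :
    HasSum (fun n : ℕ => x ^ n / n.factorial * cosMoment n k) (besselIR k x) := by
  rw [← Complex.hasSum_ofReal, ← besselI_ofReal]
  simpa using hasSum_besselI k x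

theorem one_le_besselIR_zero {x : ℝ} (hx : 0 ≤ x) : 1 ≤ besselIR 0 x := by
  have hterm : ∀ n, 0 ≤ x ^ n / n.factorial * cosMoment n 0 := fun n => by
    have := cosMoment_nonneg n 0
    positivity
  simpa [cosMoment_zero] using le_hasSum (hasSum_besselIR 0 x) 0 (fun n _ => hterm n)

theorem norm_besselI_le (k : ℤ) (z : ℂ) : ‖besselI k z‖ ≤ besselIR k ‖z‖ := by
  refine (hasSum_besselI k z).norm_le_of_bounded (hasSum_besselIR k ‖z‖) fun n => ?_
  rw [norm_mul, norm_div, norm_pow, Complex.norm_natCast, Complex.norm_real, Real.norm_eq_abs,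
    abs_of_nonneg (cosMoment_nonneg n k)]

theorem norm_besselI_div_le (k : ℤ) (z : ℂ) {c : ℝ} (hc : 0 < c) :
    ‖besselI k z / c‖ ≤ besselIR k ‖z‖ / c := by
  rw [norm_div, Complex.norm_real, Real.norm_of_nonneg hc.le]
  exact div_le_div_of_nonneg_right (norm_besselI_le k z) hc.le

theorem besselI_conj (k : ℤ) (z : ℂ) : besselI k (conj z) = conj (besselI k z) := by
  refine (hasSum_besselI k (conj z)).unique ?_
  simpa [Function.comp_def] using
    (hasSum_besselI k z).map (starRingEnd ℂ).toAddMonoidHom Complex.continuous_conj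

theorem besselI_neg (k : ℤ) (z : ℂ) : besselI (-k) z = besselI k z := by
  simp only [besselI, Int.cast_neg, neg_mul, Real.cos_neg]

theorem besselI_zero_right (k : ℤ) : besselI k 0 = if k = 0 then 1 else 0 := by
  have h := (hasSum_besselI k 0).unique (hasSum_single 0 fun n hn => by simp [zero_pow hn])
  rw [h, cosMoment_zero]
  split_ifs <;> simp

local instance : Fact (0 < 2 * π) := ⟨by positivity⟩

noncomputable def expCos (z : ℂ) : C(AddCircle (2 * π), ℂ) where
  toFun θ := Complex.exp (z * Real.Angle.cos θ)
  continuous_toFun := Complex.continuous_exp.comp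
    (continuous_const.mul (Complex.continuous_ofReal.comp Real.Angle.continuous_cos))

theorem expCos_coe (z : ℂ) (x : ℝ) :
    expCos z (x : AddCircle (2 * π)) = Complex.exp (z * Real.cos x) := by
  show Complex.exp (z * Real.Angle.cos (x : Real.Angle)) = _
  rw [Real.Angle.cos_coe]

theorem fourierCoeff_expCos (z : ℂ) (n : ℤ) : fourierCoeff (expCos z) n = besselI n z := by
  have hcont : Continuous fun x : ℝ => fourier (-n) (x : AddCircle (2 * π)) • expCos z x :=
    (fourier (-n) * expCos z).continuous.comp (AddCircle.continuous_mk' _)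
  have hπ : (π : ℂ) ≠ 0 := Complex.ofReal_ne_zero.mpr Real.pi_ne_zero
  have symmetrize : ∀ x : ℝ,
      fourier (-n) (x : AddCircle (2 * π)) • expCos z x +
        fourier (-n) ((-x : ℝ) : AddCircle (2 * π)) • expCos z (-x : ℝ) =
      2 * (Complex.exp (z * Real.cos x) * Real.cos (n * x)) := fun x => by
    have phase : ∀ y : ℝ,
        2 * π * Complex.I * (-n : ℤ) * y / (2 * π : ℝ) = -(n * y : ℝ) * Complex.I := fun y => by
      push_cast; field_simp
    simp only [fourier_coe_apply, phase, expCos_coe, smul_eq_mul, Real.cos_neg]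
    push_cast
    simp only [mul_neg, neg_neg]
    linear_combination -Complex.exp (z * Complex.cos x) * Complex.two_cos (n * x)
  rw [fourierCoeff_eq_intervalIntegral _ n (-π), show -π + 2 * π = π by ring,
    integral_neg_interval_eq_add_comp_neg hcont, intervalIntegral.integral_congr
      (fun x _ => symmetrize x), intervalIntegral.integral_const_mul, besselI, Complex.real_smul]
  push_cast
  field_simp

theorem hasSum_besselI_mul_besselI_sub (k : ℤ) (z w : ℂ) :
    HasSum (fun m : ℤ => besselI m z * besselI (k - m) w) (besselI k (z + w)) := by
  set g : C(AddCircle (2 * π), ℂ) := expCos w * fourier k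
  have parseval := hasSum_conj_fourierCoeff_mul_fourierCoeff (expCos (conj z)) g
  have hcoeff : ∀ m : ℤ, fourierCoeff g m = besselI (k - m) w := fun m => by
    rw [ContinuousMap.coe_mul, ← besselI_neg, neg_sub]
    exact (fourierCoeff_mul_fourier (expCos w) k m).trans (fourierCoeff_expCos w _)
  have hintegrand : ∀ t, conj (expCos (conj z) t) * g t =
      fourier (-(-k)) t • expCos (z + w) t := fun t => by
    simp only [g, expCos, ContinuousMap.coe_mk, ContinuousMap.mul_apply, neg_neg, smul_eq_mul,
      ← Complex.exp_conj, map_mul, Complex.conj_conj, Complex.conj_ofReal]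
    rw [add_mul, Complex.exp_add]
    ring
  simp only [fourierCoeff_expCos, besselI_conj, Complex.conj_conj, hcoeff, hintegrand] at parseval
  rwa [← fourierCoeff, fourierCoeff_expCos, besselI_neg] at parseval

theorem exists_besselI_ne_zero (z : ℂ) : ∃ k : ℤ, besselI k z ≠ 0 := by
  by_contra! h
  have := hasSum_besselI_mul_besselI_sub 0 z (-z)
  simp only [h, zero_mul, add_neg_cancel, besselI_zero_right, if_pos] at this
  exact one_ne_zero (this.unique hasSum_zero)

theorem tsum_besselI_div_mul_besselI_sub (k : ℤ) (z w c : ℂ) :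
    ∑' m : ℤ, besselI m z / c * besselI (k - m) w = besselI k (z + w) / c := by
  simp_rw [div_mul_eq_mul_div, tsum_div_const, (hasSum_besselI_mul_besselI_sub k z w).tsum_eq]

theorem stmt_15_general (h : ℝ)
    (f : ℤ → ℝ → ℂ)
    (hf : ∀ (k : ℤ) (t : ℝ),
      f k t = Complex.exp (-2 * Complex.I * (t : ℂ) / (h : ℂ) ^ 2) *
        ∑' m : ℤ, (besselI m (-Complex.I / (h : ℂ) ^ 2) / (besselIR 0 (1 / h ^ 2) : ℝ)) *
          besselI (k - m) (2 * Complex.I * (t : ℂ) / (h : ℂ) ^ 2)) :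
    (∃ k : ℤ, f k 0 ≠ 0) ∧
    (∀ k : ℤ, f k 1 = Complex.exp (-2 * Complex.I / (h : ℂ) ^ 2) *
        besselI k (Complex.I / (h : ℂ) ^ 2) / (besselIR 0 (1 / h ^ 2) : ℝ)) ∧
    (∀ k : ℤ, ‖f k 0‖ ≤ besselIR k (1 / h ^ 2) / besselIR 0 (1 / h ^ 2)) ∧
    (∀ k : ℤ, ‖f k 1‖ ≤ besselIR k (1 / h ^ 2) / besselIR 0 (1 / h ^ 2)) := by
  set r : ℝ := 1 / h ^ 2
  have hI0 : 0 < besselIR 0 r := one_pos.trans_le (one_le_besselIR_zero (by positivity))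
  have f0 : ∀ k, f k 0 = besselI k (-Complex.I / (h : ℂ) ^ 2) / (besselIR 0 r : ℂ) := fun k => by
    simp [hf, tsum_besselI_div_mul_besselI_sub]
  have f1 : ∀ k, f k 1 = Complex.exp (-2 * Complex.I / (h : ℂ) ^ 2) *
      besselI k (Complex.I / (h : ℂ) ^ 2) / (besselIR 0 r : ℂ) := fun k => by
    have hsum : -Complex.I / (h : ℂ) ^ 2 + 2 * Complex.I * ((1 : ℝ) : ℂ) / (h : ℂ) ^ 2 =
        Complex.I / (h : ℂ) ^ 2 := by
      push_cast; ring
    rw [hf, tsum_besselI_div_mul_besselI_sub, hsum, Complex.ofReal_one, mul_one]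
    exact (mul_div_assoc _ _ _).symm
  have hnorm : ‖Complex.I / (h : ℂ) ^ 2‖ = r := by simp [r]
  have hphase : ‖Complex.exp (-2 * Complex.I / (h : ℂ) ^ 2)‖ = 1 := by
    rw [show -2 * Complex.I / (h : ℂ) ^ 2 = ((-2 / h ^ 2 : ℝ) : ℂ) * Complex.I by push_cast; ring]
    exact Complex.norm_exp_ofReal_mul_I _
  refine ⟨?_, f1, fun k => ?_, fun k => ?_⟩
  · obtain ⟨k, hk⟩ := exists_besselI_ne_zero (-Complex.I / (h : ℂ) ^ 2)
    exact ⟨k, by rw [f0]; exact div_ne_zero hk (Complex.ofReal_ne_zero.mpr hI0.ne')⟩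
  · rw [f0]
    exact (norm_besselI_div_le k _ hI0).trans_eq (by rw [neg_div, norm_neg, hnorm])
  · rw [f1, mul_div_assoc, norm_mul, hphase, one_mul]
    exact (norm_besselI_div_le k _ hI0).trans_eq (by rw [hnorm])

/-- Sharpness of the condition α + β < 2: the nonzero datum
f_k(0) = I_k(-i/h²)/I_0(1/h²) evolves under the discrete Schrödinger equation to
f_k(1) = e^{-2i/h²} I_k(i/h²)/I_0(1/h²), and both f(0) and f(1) satisfy the Bessel
bounds with α = β = 1. -/
theorem stmt_15 (h : ℝ) (hh : 0 < h)
    (f : ℤ → ℝ → ℂ)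
    (hf : ∀ (k : ℤ) (t : ℝ),
      f k t = Complex.exp (-2 * Complex.I * (t : ℂ) / (h : ℂ) ^ 2) *
        ∑' m : ℤ, (besselI m (-Complex.I / (h : ℂ) ^ 2) / (besselIR 0 (1 / h ^ 2) : ℝ)) *
          besselI (k - m) (2 * Complex.I * (t : ℂ) / (h : ℂ) ^ 2)) :
    (∃ k : ℤ, f k 0 ≠ 0) ∧
    (∀ k : ℤ, f k 1 = Complex.exp (-2 * Complex.I / (h : ℂ) ^ 2) *
        besselI k (Complex.I / (h : ℂ) ^ 2) / (besselIR 0 (1 / h ^ 2) : ℝ)) ∧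
    (∀ k : ℤ, ‖f k 0‖ ≤ besselIR k (1 / h ^ 2) / besselIR 0 (1 / h ^ 2)) ∧
    (∀ k : ℤ, ‖f k 1‖ ≤ besselIR k (1 / h ^ 2) / besselIR 0 (1 / h ^ 2)) :=
  stmt_15_general h f hf
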